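/- Let a, b, c, d ∈ K^× with a ≠ b, c ≠ d, and ad - bc ≠ 0, and let C be the Scholten curve (ad-bc)Y² = ((a-b)X² - (c-d))(aX² - c)(bX² - d). Then the map φ_{c,d}(X,Y) = ( (cd(a-b)/((ad-bc)X²))·(X² - (c-d)/(a-b)), -(cd(c-d)/((ad-bc)X³))·Y ) sends points of C with X ≠ 0 to points of the elliptic curve E_{c,d} : y² = x(x-c)(x-d). -/

import Mathlib

/-!
Write `D = ad - bc`. The `x`-coordinate of `φ_{c,d}` is `cd((a-b)X² - (c-d))/(DX²)`, and
`x - c = c(c-d)(bX² - d)/(DX²)`, `x - d = d(c-d)(aX² - c)/(DX²)`. Hence `x(x-c)(x-d)` is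
`(cd(c-d))²/(D³X⁶)` times the right-hand side of the equation of `C`, which is `DY²`; this is `y²`.
-/

section ScholtenMap

variable {K : Type*} [Field K] {a b c d X : K}

theorem scholten_x_eq (hab : a ≠ b) :
    c * d * (a - b) / ((a * d - b * c) * X ^ 2) * (X ^ 2 - (c - d) / (a - b)) =
      c * d * ((a - b) * X ^ 2 - (c - d)) / ((a * d - b * c) * X ^ 2) := by
  have : a - b ≠ 0 := sub_ne_zero.mpr hab
  field_simp

theorem scholten_x_sub_c (habcd : a * d - b * c ≠ 0) (hX : X ≠ 0) :
    c * d * ((a - b) * X ^ 2 - (c - d)) / ((a * d - b * c) * X ^ 2) - c =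
      c * (c - d) * (b * X ^ 2 - d) / ((a * d - b * c) * X ^ 2) := by
  rw [div_sub' (mul_ne_zero habcd (pow_ne_zero 2 hX))]
  ring

theorem scholten_x_sub_d (habcd : a * d - b * c ≠ 0) (hX : X ≠ 0) :
    c * d * ((a - b) * X ^ 2 - (c - d)) / ((a * d - b * c) * X ^ 2) - d =
      d * (c - d) * (a * X ^ 2 - c) / ((a * d - b * c) * X ^ 2) := by
  rw [div_sub' (mul_ne_zero habcd (pow_ne_zero 2 hX))]
  ring

end ScholtenMap

theorem stmt12_general {K : Type*} [Field K]
    (a b c d : K)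
    (hab : a ≠ b) (habcd : a * d - b * c ≠ 0)
    (X Y : K) (hX : X ≠ 0)
    (hC : (a * d - b * c) * Y ^ 2 =
      ((a - b) * X ^ 2 - (c - d)) * (a * X ^ 2 - c) * (b * X ^ 2 - d)) :
    (-(c * d * (c - d) / ((a * d - b * c) * X ^ 3)) * Y) ^ 2 =
      (c * d * (a - b) / ((a * d - b * c) * X ^ 2) * (X ^ 2 - (c - d) / (a - b))) *
        (c * d * (a - b) / ((a * d - b * c) * X ^ 2) * (X ^ 2 - (c - d) / (a - b)) - c) *
        (c * d * (a - b) / ((a * d - b * c) * X ^ 2) * (X ^ 2 - (c - d) / (a - b)) - d) := by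
  rw [scholten_x_eq hab, scholten_x_sub_c habcd hX, scholten_x_sub_d habcd hX]
  calc _ = (c * d * (c - d)) ^ 2 * ((a * d - b * c) * Y ^ 2) / ((a * d - b * c) * X ^ 2) ^ 3 := by
        field_simp
    _ = _ := by
        rw [hC, div_mul_div_comm, div_mul_div_comm]
        congr 1 <;> ring

/-- the map `φ_{c,d}` sends points of the Scholten curve
`(ad-bc)Y² = ((a-b)X² - (c-d))(aX² - c)(bX² - d)` with `X ≠ 0` to points of the
elliptic curve `E_{c,d} : y² = x(x-c)(x-d)`. -/
theorem stmt12 {K : Type*} [Field K] (hchar : (2 : K) ≠ 0)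
    (a b c d : K) (ha : a ≠ 0) (hb : b ≠ 0) (hc : c ≠ 0) (hd : d ≠ 0)
    (hab : a ≠ b) (hcd : c ≠ d) (habcd : a * d - b * c ≠ 0)
    (X Y : K) (hX : X ≠ 0)
    (hC : (a * d - b * c) * Y ^ 2 =
      ((a - b) * X ^ 2 - (c - d)) * (a * X ^ 2 - c) * (b * X ^ 2 - d)) :
    (-(c * d * (c - d) / ((a * d - b * c) * X ^ 3)) * Y) ^ 2 =
      (c * d * (a - b) / ((a * d - b * c) * X ^ 2) * (X ^ 2 - (c - d) / (a - b))) *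
        (c * d * (a - b) / ((a * d - b * c) * X ^ 2) * (X ^ 2 - (c - d) / (a - b)) - c) *
        (c * d * (a - b) / ((a * d - b * c) * X ^ 2) * (X ^ 2 - (c - d) / (a - b)) - d) :=
  stmt12_general a b c d hab habcd X Y hX hC
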